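/- In the hardness-of-approximation instance for BMaxP: V = {u_1,...,u_n} ∪ {v, v', v*} with weights ω(u_i)=a_i, ω(v)=M+1, ω(v')=R+M+2, ω(v*)=1 where R=Σa_i, quota q=R+2M+3, initial delegations d(u_i)=v and v, v', v* gurus. Then (a) v* is not a swing agent for any coalition in the initial election, so DB_{v*}=0; (b) after redirecting the delegations of a set U ⊆ {u_1,...,u_n} away from v (making them gurus), v* is a swing agent for the coalition U ∪ {v'} if and only if Σ_{u_i∈U} a_i = M. -/

import Mathlib

open Finset
open scoped Classical

/-- Total weight of voters in `C` whose entire delegation chain (the iterates of `d`)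
stays inside `C` (the "active" voters). -/
noncomputable def gamma {V : Type*} [Fintype V] (w : V → ℕ) (d : V → V) (C : Finset V) : ℕ :=
  ∑ i ∈ C, if ∀ k : ℕ, d^[k] i ∈ C then w i else 0

/-- A coalition wins iff its active weight meets the quota. -/
def wins {V : Type*} [Fintype V] (w : V → ℕ) (d : V → V) (q : ℕ) (C : Finset V) : Prop :=
  q ≤ gamma w d C

/-- Voter `i` is a swing agent for coalition `C`. -/
noncomputable def swing {V : Type*} [Fintype V] (w : V → ℕ) (d : V → V) (q : ℕ)
    (i : V) (C : Finset V) : Prop :=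
  ¬ wins w d q C ∧ wins w d q (insert i C)

/-- Number of coalitions `C ⊆ V \ {i}` for which `i` is a swing agent. -/
noncomputable def swingCount {V : Type*} [Fintype V] (w : V → ℕ) (d : V → V) (q : ℕ)
    (i : V) : ℕ :=
  (((univ : Finset V).erase i).powerset.filter (fun C => swing w d q i C)).card

/-- Delegative Banzhaf measure. -/
noncomputable def DB {V : Type*} [Fintype V] (w : V → ℕ) (d : V → V) (q : ℕ) (i : V) : ℚ :=
  (swingCount w d q i : ℚ) / 2 ^ (Fintype.card V - 1)

/-- Delegative Shapley-Shubik index. -/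
noncomputable def DS {V : Type*} [Fintype V] (w : V → ℕ) (d : V → V) (q : ℕ) (i : V) : ℚ :=
  ∑ C ∈ ((univ : Finset V).erase i).powerset,
    if swing w d q i C then
      (Nat.factorial C.card * Nat.factorial (Fintype.card V - C.card - 1) : ℚ) /
        Nat.factorial (Fintype.card V)
    else 0

/-! When every voter delegates directly to a guru, a voter is active in `C` iff it and its guru
lie in `C`. Then a guru `v` to whom nobody else delegates adds exactly `w v` to any coalition it
joins, so it is a swing agent for `C` iff `gamma C` lies in `[q - w v, q)`. For the initial
delegation, a coalition avoiding `v*` either already contains both `v` and `v'` (and wins), or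
misses `v` (so at most `v'` is active) or `v'` (so at most everything else is active); in both
latter cases it stays at least `2` below the quota. After the voters of `U` become gurus, the
coalition `U ∪ {v'}` is fully active with weight `Σ_{U} a_i + R + M + 2`, which is `q - 1`
exactly when `Σ_{U} a_i = M`. -/

section Delegation

variable {V : Type*} [Fintype V] (w : V → ℕ) {d : V → V}

lemma gamma_eq_sum_filter [DecidableEq V] (hd : ∀ x, d (d x) = d x) (C : Finset V) :
    gamma w d C = ∑ i ∈ C with d i ∈ C, w i := by
  rw [gamma, sum_filter]
  refine sum_congr rfl fun i hi => if_congr ⟨fun h => by simpa using h 1, fun h k => ?_⟩ rfl rfl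
  cases k with
  | zero => exact hi
  | succ k => rwa [Function.iterate_succ_apply, Function.iterate_fixed (hd i)]

lemma gamma_insert_of_isolated (hd : ∀ x, d (d x) = d x) {v : V} (hdv : d v = v)
    (hv : ∀ x, d x = v → x = v) {C : Finset V} (hvC : v ∉ C) :
    gamma w d (insert v C) = gamma w d C + w v := by
  have hactive : {i ∈ insert v C | d i ∈ insert v C} = insert v {i ∈ C | d i ∈ C} := by
    ext x
    simp only [mem_filter, mem_insert]
    constructor
    · rintro ⟨hx | hx, hdx | hdx⟩
      exacts [.inl hx, .inl hx, (hvC (hv x hdx ▸ hx)).elim, .inr ⟨hx, hdx⟩]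
    · rintro (rfl | ⟨hx, hdx⟩)
      exacts [⟨.inl rfl, .inl hdv⟩, ⟨.inr hx, .inr hdx⟩]
  rw [gamma_eq_sum_filter w hd, gamma_eq_sum_filter w hd, hactive,
    sum_insert fun h => hvC (mem_filter.mp h).1, add_comm]

lemma swing_iff_of_isolated (hd : ∀ x, d (d x) = d x) {v : V} (hdv : d v = v)
    (hv : ∀ x, d x = v → x = v) (q : ℕ) {C : Finset V} (hvC : v ∉ C) :
    swing w d q v C ↔ gamma w d C < q ∧ q ≤ gamma w d C + w v := by
  rw [swing, wins, wins, gamma_insert_of_isolated w hd hdv hv hvC, not_le]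

end Delegation

/-! `Sum.inl i` is the voter `u_i`; `Sum.inr 0`, `Sum.inr 1`, `Sum.inr 2` are `v`, `v'`, `v*`. -/

namespace BMaxPInstance

variable {n : ℕ}

def weights (a : Fin n → ℕ) (M : ℕ) : Fin n ⊕ Fin 3 → ℕ :=
  Sum.elim a ![M + 1, (∑ i, a i) + M + 2, 1]

def initialDelegation : Fin n ⊕ Fin 3 → Fin n ⊕ Fin 3 :=
  Sum.elim (fun _ => Sum.inr 0) Sum.inr

def redirected (U : Finset (Fin n)) : Fin n ⊕ Fin 3 → Fin n ⊕ Fin 3 :=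
  Sum.elim (fun i => if i ∈ U then Sum.inl i else Sum.inr 0) Sum.inr

lemma initialDelegation_idem (x : Fin n ⊕ Fin 3) :
    initialDelegation (initialDelegation x) = initialDelegation x := by
  rcases x with i | j <;> rfl

lemma eq_inr_two_of_initialDelegation_eq (x : Fin n ⊕ Fin 3)
    (hx : initialDelegation x = Sum.inr 2) : x = Sum.inr 2 := by
  rcases x with i | j
  · simp [initialDelegation] at hx
  · exact hx

lemma redirected_idem (U : Finset (Fin n)) (x : Fin n ⊕ Fin 3) :
    redirected U (redirected U x) = redirected U x := by
  rcases x with i | j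
  · by_cases hi : i ∈ U <;> simp [redirected, hi]
  · rfl

lemma eq_inr_two_of_redirected_eq (U : Finset (Fin n)) (x : Fin n ⊕ Fin 3)
    (hx : redirected U x = Sum.inr 2) : x = Sum.inr 2 := by
  rcases x with i | j
  · by_cases hi : i ∈ U <;> simp [redirected, hi] at hx
  · exact hx

variable (a : Fin n → ℕ) (M : ℕ) {C : Finset (Fin n ⊕ Fin 3)}

lemma sum_weights : ∑ x, weights a M x = 2 * ∑ i, a i + 2 * M + 4 := by
  rw [Fintype.sum_sum_type, Fin.sum_univ_three]
  change ∑ i, a i + ((M + 1) + ((∑ i, a i) + M + 2) + 1) = _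
  ring

lemma quota_le_gamma_initial (h0 : Sum.inr 0 ∈ C) (h1 : Sum.inr 1 ∈ C) :
    (∑ i, a i) + 2 * M + 3 ≤ gamma (weights a M) initialDelegation C := by
  rw [gamma_eq_sum_filter _ initialDelegation_idem]
  calc (∑ i, a i) + 2 * M + 3 = ∑ x ∈ {Sum.inr 0, Sum.inr 1}, weights a M x := by
        rw [sum_pair (by simp)]
        change _ = (M + 1) + ((∑ i, a i) + M + 2)
        ring
    _ ≤ _ := sum_le_sum_of_subset <| by
        simp only [insert_subset_iff, singleton_subset_iff, mem_filter]
        exact ⟨⟨h0, h0⟩, ⟨h1, h1⟩⟩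

lemma gamma_initial_le_of_inr_zero_notMem (h0 : Sum.inr 0 ∉ C) (h2 : Sum.inr 2 ∉ C) :
    gamma (weights a M) initialDelegation C ≤ (∑ i, a i) + M + 2 := by
  rw [gamma_eq_sum_filter _ initialDelegation_idem]
  calc _ ≤ ∑ x ∈ {Sum.inr 1}, weights a M x := sum_le_sum_of_subset fun x hx => ?_
    _ = _ := by simp [weights]
  obtain ⟨hxC, hdx⟩ := mem_filter.mp hx
  rcases x with i | j
  · exact absurd hdx h0
  · fin_cases j <;> simp_all

lemma gamma_initial_le_of_inr_one_notMem (h1 : Sum.inr 1 ∉ C) (h2 : Sum.inr 2 ∉ C) :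
    gamma (weights a M) initialDelegation C ≤ (∑ i, a i) + M + 1 := by
  rw [gamma_eq_sum_filter _ initialDelegation_idem]
  have hsub : {x ∈ C | initialDelegation x ∈ C} ⊆ univ \ {Sum.inr 1, Sum.inr 2} := by
    intro x hx
    have := (mem_filter.mp hx).1
    simp only [mem_sdiff, mem_univ, mem_insert, mem_singleton, true_and]
    rintro (rfl | rfl) <;> contradiction
  have htotal := sum_sdiff (f := weights a M) (subset_univ {Sum.inr 1, Sum.inr 2})
  rw [sum_weights, sum_pair (by simp)] at htotal
  change _ + (((∑ i, a i) + M + 2) + 1) = _ at htotal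
  have := sum_le_sum_of_subset (f := weights a M) hsub
  omega

lemma not_swing_initial (hM : 1 ≤ M) (h2 : Sum.inr 2 ∉ C) :
    ¬ swing (weights a M) initialDelegation ((∑ i, a i) + 2 * M + 3) (Sum.inr 2) C := by
  rw [swing_iff_of_isolated _ initialDelegation_idem rfl eq_inr_two_of_initialDelegation_eq _ h2]
  change ¬ (_ ∧ _ ≤ _ + 1)
  by_cases h0 : Sum.inr 0 ∈ C
  · by_cases h1 : Sum.inr 1 ∈ C
    · have := quota_le_gamma_initial a M h0 h1
      omega
    · have := gamma_initial_le_of_inr_one_notMem a M h1 h2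
      omega
  · have := gamma_initial_le_of_inr_zero_notMem a M h0 h2
    omega

lemma DB_initial_eq_zero (hM : 1 ≤ M) :
    DB (weights a M) initialDelegation ((∑ i, a i) + 2 * M + 3) (Sum.inr 2) = 0 := by
  have hcount :
      swingCount (weights a M) initialDelegation ((∑ i, a i) + 2 * M + 3) (Sum.inr 2) = 0 := by
    rw [swingCount, card_eq_zero, filter_eq_empty_iff]
    exact fun C hC => not_swing_initial a M hM fun h => by simpa using mem_powerset.mp hC h
  rw [DB, hcount, Nat.cast_zero, zero_div]

lemma gamma_redirected_coalition (U : Finset (Fin n)) :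
    gamma (weights a M) (redirected U) (U.image Sum.inl ∪ {Sum.inr 1}) =
      ∑ i ∈ U, a i + ((∑ i, a i) + M + 2) := by
  rw [gamma_eq_sum_filter _ (redirected_idem U), filter_true_of_mem, sum_union (by simp),
    sum_image (by simp), sum_singleton]
  · rfl
  · rintro (i | j) hx <;> simp_all [redirected]

lemma swing_redirected_iff (U : Finset (Fin n)) :
    swing (weights a M) (redirected U) ((∑ i, a i) + 2 * M + 3) (Sum.inr 2)
      (U.image Sum.inl ∪ {Sum.inr 1}) ↔ ∑ i ∈ U, a i = M := by
  rw [swing_iff_of_isolated _ (redirected_idem U) rfl (eq_inr_two_of_redirected_eq U) _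
    (by simp), gamma_redirected_coalition]
  change _ ∧ _ ≤ _ + 1 ↔ _
  omega

end BMaxPInstance

/-- Hardness-of-approximation instance for BMaxP.
Voters: u_1,...,u_n (= Sum.inl i, weights a_i), v (= inr 0, weight M+1),
v' (= inr 1, weight R+M+2) and v* (= inr 2, weight 1), with R = Σ a_i and quota
q = R + 2M + 3.
(a) In the initial election (each u_i delegates to v; v, v', v* are gurus),
v* is not swing for any coalition, so DB_{v*} = 0.
(b) After redirecting the delegations of U ⊆ {u_1,...,u_n} away from v (making
them gurus), v* is a swing agent for the coalition U ∪ {v'} iff Σ_{i∈U} a_i = M. -/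
theorem stmt18 (n : ℕ) (a : Fin n → ℕ) (M : ℕ) (hM : 1 ≤ M) :
    DB (Sum.elim a (![M + 1, (∑ i, a i) + M + 2, 1] : Fin 3 → ℕ))
        (Sum.elim (fun _ => (Sum.inr 0 : Fin n ⊕ Fin 3)) (fun j => Sum.inr j))
        ((∑ i, a i) + 2 * M + 3) (Sum.inr 2) = 0 ∧
    ∀ U : Finset (Fin n),
      (swing (Sum.elim a (![M + 1, (∑ i, a i) + M + 2, 1] : Fin 3 → ℕ))
          (Sum.elim
            (fun i => if i ∈ U then (Sum.inl i : Fin n ⊕ Fin 3) else Sum.inr 0)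
            (fun j => Sum.inr j))
          ((∑ i, a i) + 2 * M + 3) (Sum.inr 2)
          (U.image Sum.inl ∪ {Sum.inr 1}) ↔
        ∑ i ∈ U, a i = M) :=
  ⟨BMaxPInstance.DB_initial_eq_zero a M hM, BMaxPInstance.swing_redirected_iff a M⟩
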